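/- For integers n ≥ 1, d_max ≥ 0, and 0 ≤ l_max ≤ n−1, the number of triples (d, M, R), where d is an integer with 0 ≤ d ≤ d_max, M is a block configuration of the horizon T = {0,1,…,n−1} consisting of at most l_max + 1 blocks, and R ⊆ M is a subset such that no two blocks of R are adjacent, equals (d_max + 1) · Σ_{l=0}^{l_max} C(n−1, l) · F_{l+3}. -/

import Mathlib

open scoped Classical

/-- A block in the horizon `{0,1,…,n-1}`: a nonempty set of consecutive integers
contained in `Finset.range n`. -/
def IsBlock (n : ℕ) (B : Finset ℕ) : Prop :=
  (∃ a b : ℕ, a ≤ b ∧ B = Finset.Icc a b) ∧ B ⊆ Finset.range n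

/-- A block configuration of the horizon `{0,1,…,n-1}`: a finite collection of
pairwise disjoint blocks whose union is the whole horizon. -/
def IsBlockConfig (n : ℕ) (M : Finset (Finset ℕ)) : Prop :=
  (∀ B ∈ M, IsBlock n B) ∧
  (M : Set (Finset ℕ)).PairwiseDisjoint id ∧
  M.sup id = Finset.range n

/-- `B` immediately precedes `B'`. -/
def Precedes (B B' : Finset ℕ) : Prop :=
  ∃ t ∈ B, (∀ u ∈ B, u ≤ t) ∧ (t + 1) ∈ B' ∧ (∀ u ∈ B', t + 1 ≤ u)

/-- Two blocks are adjacent if the end point of one immediately precedes the start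
point of the other. -/
def AdjBlocks (B B' : Finset ℕ) : Prop := Precedes B B' ∨ Precedes B' B

/-! A block configuration is determined by the set `S ∋ 0` of its block starts, and two distinct
blocks of it are adjacent exactly when no start lies strictly between their starts. So the
admissible `R` correspond to the subsets of `S` any two of whose elements are separated by a third
element of `S`, i.e. to the independent sets of a path on `#S` vertices, of which there are
`F (#S + 2)`. The sets `S` with `#S = l + 1` are `{0} ∪ s` for the `l`-subsets `s` of
`{1, …, n - 1}`. -/

open Finset

section Separated
variable {α : Type*} [LinearOrder α]

def IsSeparatedBy (u r : Finset α) : Prop :=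
  ∀ a ∈ r, ∀ b ∈ r, a < b → ∃ c ∈ u, a < c ∧ c < b

lemma isSeparatedBy_insert_iff_of_forall_lt {u r : Finset α} {x : α} (hx : ∀ z ∈ u, z < x)
    (hr : r ⊆ u) : IsSeparatedBy (insert x u) r ↔ IsSeparatedBy u r := by
  unfold IsSeparatedBy
  grind

lemma isSeparatedBy_insert_insert_iff {w r : Finset α} {x y : α} (hxy : y < x)
    (hy : ∀ z ∈ w, z < y) (hr : r ⊆ w) :
    IsSeparatedBy (insert x (insert y w)) (insert x r) ↔ IsSeparatedBy w r := by
  unfold IsSeparatedBy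
  grind

lemma not_isSeparatedBy_insert_insert {w r : Finset α} {x y : α} (hxy : y < x)
    (hy : ∀ z ∈ w, z < y) :
    ¬ IsSeparatedBy (insert x (insert y w)) (insert x (insert y r)) := by
  unfold IsSeparatedBy
  grind

lemma filter_isSeparatedBy_powerset_of_subsingleton {u : Finset α}
    (hu : (u : Set α).Subsingleton) :
    {r ∈ u.powerset | IsSeparatedBy u r} = u.powerset :=
  filter_true_of_mem fun _r hr _a ha _b hb hab =>
    absurd (hu.anti (coe_subset.2 (mem_powerset.1 hr)) ha hb) hab.ne

lemma card_isSeparatedBy_insert_insert {w : Finset α} {x y : α} (hxy : y < x)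
    (hy : ∀ z ∈ w, z < y) :
    #{r ∈ (insert x (insert y w)).powerset | IsSeparatedBy (insert x (insert y w)) r} =
      #{r ∈ (insert y w).powerset | IsSeparatedBy (insert y w) r} +
        #{r ∈ w.powerset | IsSeparatedBy w r} := by
  have hx : ∀ z ∈ insert y w, z < x := by grind
  have hyw : y ∉ w := fun h => (hy y h).false
  simp only [card_filter]
  rw [sum_powerset_insert (fun h => (hx x h).false)]
  congr 1
  · refine sum_congr rfl fun r hr => ?_
    rw [isSeparatedBy_insert_iff_of_forall_lt hx (mem_powerset.1 hr)]
  · rw [sum_powerset_insert hyw, add_eq_left.2 (sum_eq_zero fun r _ =>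
      if_neg (not_isSeparatedBy_insert_insert hxy hy))]
    refine sum_congr rfl fun r hr => ?_
    rw [isSeparatedBy_insert_insert_iff hxy hy (mem_powerset.1 hr)]

theorem card_isSeparatedBy_powerset (u : Finset α) :
    #{r ∈ u.powerset | IsSeparatedBy u r} = Nat.fib (#u + 2) := by
  suffices #{r ∈ u.powerset | IsSeparatedBy u r} = Nat.fib (#u + 2) ∧
      ∀ x, (∀ z ∈ u, z < x) →
        #{r ∈ (insert x u).powerset | IsSeparatedBy (insert x u) r} = Nat.fib (#u + 3) from
    this.1
  induction u using Finset.induction_on_max with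
  | empty =>
    rw [filter_isSeparatedBy_powerset_of_subsingleton (by simp)]
    refine ⟨rfl, fun x _ => ?_⟩
    rw [filter_isSeparatedBy_powerset_of_subsingleton (by simp)]
    rfl
  | insert y w hy ih =>
    have hyw : y ∉ w := fun h => (hy y h).false
    refine ⟨by rw [ih.2 y hy, card_insert_of_notMem hyw], fun x hx => ?_⟩
    rw [card_isSeparatedBy_insert_insert (hx y (mem_insert_self y w)) hy, ih.2 y hy, ih.1,
      card_insert_of_notMem hyw, Nat.fib_add_two (n := #w + 2)]
    ring

end Separated

lemma sum_powerset_filter_card_le {α β : Type*} [AddCommMonoid β] (U : Finset α) (m : ℕ)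
    (g : ℕ → β) :
    ∑ s ∈ U.powerset with #s ≤ m, g #s = ∑ l ∈ range (m + 1), (#U).choose l • g l := by
  rw [← sum_fiberwise_of_maps_to (g := card) (t := range (m + 1))
    fun s hs => mem_range.2 (Nat.lt_succ_of_le (mem_filter.1 hs).2)]
  refine sum_congr rfl fun l hl => ?_
  have hfiber : {s ∈ {s ∈ U.powerset | #s ≤ m} | #s = l} = powersetCard l U := by
    ext s
    simp only [mem_filter, mem_powerset, mem_powersetCard]
    have := mem_range.1 hl
    grind
  rw [hfiber, sum_congr rfl fun s hs => congrArg g (mem_powersetCard.1 hs).2, sum_const,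
    card_powersetCard]

lemma card_filter_product_and {α β : Type*} (s : Finset α) (t : Finset β) (p : α → Prop)
    (q : α → β → Prop) [DecidablePred p] [∀ a, DecidablePred (q a)] :
    #{x ∈ s ×ˢ t | p x.1 ∧ q x.1 x.2} = ∑ a ∈ s with p a, #{b ∈ t | q a b} := by
  rw [card_filter, sum_product, sum_filter]
  refine sum_congr rfl fun a _ => ?_
  rw [card_filter]
  split_ifs with h <;> simp [h]

lemma precedes_Icc_iff {a b a' b' : ℕ} (h : a ≤ b) (h' : a' ≤ b') :
    Precedes (Icc a b) (Icc a' b') ↔ b + 1 = a' := by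
  simp only [Precedes, mem_Icc]
  constructor
  · rintro ⟨t, ht, hmax, ht', hmin⟩
    have := hmax b ⟨h, le_rfl⟩
    have := hmin a' ⟨le_rfl, h'⟩
    omega
  · rintro rfl
    exact ⟨b, ⟨h, le_rfl⟩, fun u hu => hu.2, ⟨le_rfl, h'⟩, fun u hu => hu.1⟩

lemma not_precedes_self (B : Finset ℕ) : ¬ Precedes B B := fun ⟨t, _, hmax, ht, _⟩ =>
  (hmax (t + 1) ht).not_gt t.lt_succ_self

noncomputable def blockStart (B : Finset ℕ) : ℕ := sInf (B : Set ℕ)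

lemma blockStart_Icc {a b : ℕ} (h : a ≤ b) : blockStart (Icc a b) = a := by
  rw [blockStart, coe_Icc, csInf_Icc h]

noncomputable def starts (M : Finset (Finset ℕ)) : Finset ℕ := M.image blockStart

namespace IsBlockConfig
variable {n : ℕ} {M : Finset (Finset ℕ)} {B B' : Finset ℕ}

lemma exists_eq_Icc (hM : IsBlockConfig n M) (hB : B ∈ M) :
    ∃ a b, a ≤ b ∧ b < n ∧ B = Icc a b := by
  obtain ⟨⟨a, b, hab, rfl⟩, hsub⟩ := hM.1 B hB
  exact ⟨a, b, hab, mem_range.1 (hsub (right_mem_Icc.2 hab)), rfl⟩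

lemma eq_of_mem_of_mem (hM : IsBlockConfig n M) (hB : B ∈ M) (hB' : B' ∈ M) {t : ℕ}
    (ht : t ∈ B) (ht' : t ∈ B') : B = B' :=
  hM.2.1.elim_finset hB hB' t ht ht'

lemma exists_mem (hM : IsBlockConfig n M) {t : ℕ} (ht : t < n) : ∃ B ∈ M, t ∈ B := by
  rw [← mem_range, ← hM.2.2] at ht
  simpa only [mem_sup, id_eq] using ht

lemma blockStart_mem (hM : IsBlockConfig n M) (hB : B ∈ M) : blockStart B ∈ B := by
  obtain ⟨⟨a, b, hab, rfl⟩, -⟩ := hM.1 B hB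
  rw [blockStart_Icc hab]
  exact left_mem_Icc.2 hab

lemma injOn_blockStart (hM : IsBlockConfig n M) : Set.InjOn blockStart M := fun _ hB _ hB' h =>
  hM.eq_of_mem_of_mem hB hB' (hM.blockStart_mem hB) (h ▸ hM.blockStart_mem hB')

lemma card_starts (hM : IsBlockConfig n M) : #(starts M) = #M :=
  card_image_of_injOn hM.injOn_blockStart

lemma starts_subset_range (hM : IsBlockConfig n M) : starts M ⊆ range n := by
  intro a ha
  obtain ⟨B, hB, rfl⟩ := mem_image.1 ha
  exact (hM.1 B hB).2 (hM.blockStart_mem hB)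

lemma zero_mem_starts (hM : IsBlockConfig n M) (hn : 0 < n) : 0 ∈ starts M := by
  obtain ⟨B, hB, h0⟩ := hM.exists_mem hn
  obtain ⟨a, b, hab, -, rfl⟩ := hM.exists_eq_Icc hB
  rw [mem_Icc, Nat.le_zero] at h0
  exact mem_image.2 ⟨_, hB, by rw [blockStart_Icc hab, h0.1]⟩

lemma lt_of_mem_starts (hM : IsBlockConfig n M) {a b c : ℕ} (hB : Icc a b ∈ M)
    (hc : c ∈ starts M) (hac : a < c) : b < c := by
  by_contra! hcb
  obtain ⟨B', hB', rfl⟩ := mem_image.1 hc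
  have hBB' := hM.eq_of_mem_of_mem hB hB' (mem_Icc.2 ⟨hac.le, hcb⟩) (hM.blockStart_mem hB')
  have hab : a ≤ b := hac.le.trans hcb
  rw [← hBB', blockStart_Icc hab] at hac
  exact hac.false

lemma succ_mem_starts (hM : IsBlockConfig n M) {a b : ℕ} (hab : a ≤ b) (hB : Icc a b ∈ M)
    (hb : b + 1 < n) : b + 1 ∈ starts M := by
  obtain ⟨B', hB', hbB'⟩ := hM.exists_mem hb
  obtain ⟨a', b', hab', -, rfl⟩ := hM.exists_eq_Icc hB'
  refine mem_image.2 ⟨_, hB', ?_⟩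
  rw [blockStart_Icc hab']
  by_contra hne
  have hBB' := hM.eq_of_mem_of_mem hB hB' (right_mem_Icc.2 hab) (by grind)
  grind

lemma adjBlocks_iff (hM : IsBlockConfig n M) (hB : B ∈ M) (hB' : B' ∈ M)
    (h : blockStart B < blockStart B') :
    AdjBlocks B B' ↔ ¬ ∃ c ∈ starts M, blockStart B < c ∧ c < blockStart B' := by
  obtain ⟨a, b, hab, -, rfl⟩ := hM.exists_eq_Icc hB
  obtain ⟨a', b', hab', hb'n, rfl⟩ := hM.exists_eq_Icc hB'
  rw [blockStart_Icc hab, blockStart_Icc hab'] at h ⊢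
  rw [AdjBlocks, precedes_Icc_iff hab hab', precedes_Icc_iff hab' hab]
  constructor
  · rintro (rfl | rfl) ⟨c, hc, hac, hca'⟩
    · exact (hM.lt_of_mem_starts hB hc hac).not_ge (Nat.le_of_lt_succ hca')
    · omega
  · intro hsep
    have ha' : a' ∈ starts M := mem_image.2 ⟨_, hB', blockStart_Icc hab'⟩
    have hba' := hM.lt_of_mem_starts hB ha' h
    refine Or.inl (by_contra fun hne => hsep ⟨b + 1, ?_, by omega, by omega⟩)
    exact hM.succ_mem_starts hab hB (by omega)

lemma forall_not_adjBlocks_iff (hM : IsBlockConfig n M) {R : Finset (Finset ℕ)} (hR : R ⊆ M) :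
    (∀ B ∈ R, ∀ B' ∈ R, ¬ AdjBlocks B B') ↔
      IsSeparatedBy (starts M) (R.image blockStart) := by
  have hsep : ∀ B ∈ R, ∀ B' ∈ R, blockStart B < blockStart B' →
      (¬ AdjBlocks B B' ↔ ∃ c ∈ starts M, blockStart B < c ∧ c < blockStart B') :=
    fun B hB B' hB' hlt => by rw [hM.adjBlocks_iff (hR hB) (hR hB') hlt, not_not]
  simp only [IsSeparatedBy, forall_mem_image]
  refine ⟨fun h B hB B' hB' hlt => (hsep B hB B' hB' hlt).1 (h B hB B' hB'),
    fun h B hB B' hB' => ?_⟩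
  rcases lt_trichotomy (blockStart B) (blockStart B') with hlt | heq | hgt
  · exact (hsep B hB B' hB' hlt).2 (h hB hB' hlt)
  · rw [hM.injOn_blockStart (hR hB) (hR hB') heq]
    simp [AdjBlocks, not_precedes_self]
  · rw [AdjBlocks, or_comm]
    exact (hsep B' hB' B hB hgt).2 (h hB' hB hgt)

lemma card_filter_powerset_forall_not_adjBlocks (hM : IsBlockConfig n M) :
    #{R ∈ M.powerset | ∀ B ∈ R, ∀ B' ∈ R, ¬ AdjBlocks B B'} = Nat.fib (#M + 2) := by
  rw [← hM.card_starts, ← card_isSeparatedBy_powerset, starts, powerset_image, filter_image,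
    card_image_of_injOn]
  · congr 1
    ext R
    simp only [mem_filter, mem_powerset]
    exact and_congr_right hM.forall_not_adjBlocks_iff
  · intro R hR R' hR' h
    simp only [coe_filter, mem_powerset, Set.mem_ofPred_eq] at hR hR'
    exact (image_eq_image_iff_of_injOn hM.injOn_blockStart hR.1 hR'.1).1 h

lemma subset_powerset_range (hM : IsBlockConfig n M) : M ⊆ (range n).powerset :=
  fun B hB => mem_powerset.2 (hM.1 B hB).2

lemma card_filter_subset_forall_not_adjBlocks (hM : IsBlockConfig n M) :
    #{R ∈ (range n).powerset.powerset | R ⊆ M ∧ ∀ B ∈ R, ∀ B' ∈ R, ¬ AdjBlocks B B'} =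
      Nat.fib (#M + 2) := by
  rw [← hM.card_filter_powerset_forall_not_adjBlocks]
  congr 1
  ext R
  simp only [mem_filter, mem_powerset]
  exact ⟨fun ⟨_, h⟩ => h, fun h => ⟨h.1.trans hM.subset_powerset_range, h⟩⟩

end IsBlockConfig

-- `n` is the start of a sentinel block after the horizon, so the last block ends at `n - 1`.
noncomputable def nextStart (n : ℕ) (S : Finset ℕ) (a : ℕ) : ℕ :=
  sInf {c | c ∈ insert n S ∧ a < c}

noncomputable def blockAt (n : ℕ) (S : Finset ℕ) (a : ℕ) : Finset ℕ :=
  Icc a (nextStart n S a - 1)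

noncomputable def blocksOf (n : ℕ) (S : Finset ℕ) : Finset (Finset ℕ) :=
  S.image (blockAt n S)

section blocksOf
variable {n : ℕ} {S : Finset ℕ} {a : ℕ}

lemma nextStart_mem_insert (ha : a < n) : nextStart n S a ∈ insert n S :=
  (Nat.sInf_mem (s := {c | c ∈ insert n S ∧ a < c}) ⟨n, mem_insert_self n S, ha⟩).1

lemma lt_nextStart (ha : a < n) : a < nextStart n S a :=
  (Nat.sInf_mem (s := {c | c ∈ insert n S ∧ a < c}) ⟨n, mem_insert_self n S, ha⟩).2

lemma nextStart_le {c : ℕ} (hc : c ∈ insert n S) (hac : a < c) : nextStart n S a ≤ c :=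
  Nat.sInf_le ⟨hc, hac⟩

lemma mem_blockAt (ha : a < n) {t : ℕ} :
    t ∈ blockAt n S a ↔ a ≤ t ∧ t < nextStart n S a := by
  have := lt_nextStart (S := S) ha
  rw [blockAt, mem_Icc]
  omega

lemma blockStart_blockAt (ha : a < n) : blockStart (blockAt n S a) = a :=
  blockStart_Icc (Nat.le_sub_one_of_lt (lt_nextStart ha))

lemma isBlock_blockAt (ha : a < n) : IsBlock n (blockAt n S a) := by
  have hlt := lt_nextStart (S := S) ha
  have hle : nextStart n S a ≤ n := nextStart_le (mem_insert_self n S) ha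
  refine ⟨⟨a, _, by omega, rfl⟩, fun t ht => ?_⟩
  rw [mem_blockAt ha] at ht
  exact mem_range.2 (by omega)

lemma disjoint_blockAt (hS : S ⊆ range n) {a a' : ℕ} (ha : a ∈ S) (ha' : a' ∈ S)
    (h : a < a') :
    Disjoint (blockAt n S a) (blockAt n S a') := by
  have hnext := nextStart_le (n := n) (mem_insert_of_mem ha') h
  rw [disjoint_left]
  intro t ht ht'
  rw [mem_blockAt (mem_range.1 (hS ha))] at ht
  rw [mem_blockAt (mem_range.1 (hS ha'))] at ht'
  omega

lemma exists_mem_blockAt (hS : S ⊆ range n) (h0 : 0 ∈ S) {t : ℕ} (ht : t < n) :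
    ∃ a ∈ S, t ∈ blockAt n S a := by
  have hne : {c ∈ S | c ≤ t}.Nonempty := ⟨0, mem_filter.2 ⟨h0, t.zero_le⟩⟩
  obtain ⟨ha, hat⟩ := mem_filter.1 (max'_mem _ hne)
  set a := max' _ hne
  have han : a < n := mem_range.1 (hS ha)
  refine ⟨a, ha, (mem_blockAt han).2 ⟨hat, not_le.1 fun hle => ?_⟩⟩
  rcases mem_insert.1 (nextStart_mem_insert (S := S) han) with h | h
  · omega
  · exact (lt_nextStart han).not_ge (le_max' _ _ (mem_filter.2 ⟨h, hle⟩))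

lemma isBlockConfig_blocksOf (hS : S ⊆ range n) (h0 : 0 ∈ S) :
    IsBlockConfig n (blocksOf n S) := by
  refine ⟨forall_mem_image.2 fun a ha => isBlock_blockAt (mem_range.1 (hS ha)), ?_, ?_⟩
  · rintro _ hB _ hB' hne
    obtain ⟨a, ha, rfl⟩ := mem_image.1 (mem_coe.1 hB)
    obtain ⟨a', ha', rfl⟩ := mem_image.1 (mem_coe.1 hB')
    rcases lt_or_gt_of_ne (ne_of_apply_ne _ hne) with h | h
    · exact disjoint_blockAt hS ha ha' h
    · exact (disjoint_blockAt hS ha' ha h).symm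
  · ext t
    simp only [mem_sup, id, blocksOf, exists_mem_image]
    exact ⟨fun ⟨a, ha, ht⟩ => (isBlock_blockAt (mem_range.1 (hS ha))).2 ht,
      fun ht => exists_mem_blockAt hS h0 (mem_range.1 ht)⟩

lemma starts_blocksOf (hS : S ⊆ range n) : starts (blocksOf n S) = S := by
  rw [starts, blocksOf, image_image]
  exact (image_congr fun a ha => blockStart_blockAt (mem_range.1 (hS ha))).trans image_id

end blocksOf

lemma IsBlockConfig.blockAt_blockStart {n : ℕ} {M : Finset (Finset ℕ)} (hM : IsBlockConfig n M)
    {B : Finset ℕ} (hB : B ∈ M) : blockAt n (starts M) (blockStart B) = B := by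
  obtain ⟨a, b, hab, hbn, rfl⟩ := hM.exists_eq_Icc hB
  rw [blockStart_Icc hab]
  have hsucc : b + 1 ∈ insert n (starts M) := by
    rcases (Nat.succ_le_of_lt hbn).eq_or_lt with h | h
    · exact h ▸ mem_insert_self _ _
    · exact mem_insert_of_mem (hM.succ_mem_starts hab hB h)
  have han : a < n := hab.trans_lt hbn
  have hnext : nextStart n (starts M) a = b + 1 := by
    refine le_antisymm (nextStart_le hsucc (by omega)) ?_
    rcases mem_insert.1 (nextStart_mem_insert (S := starts M) han) with h | h
    · omega
    · exact hM.lt_of_mem_starts hB h (lt_nextStart han)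
  rw [blockAt, hnext, Nat.add_sub_cancel]

lemma IsBlockConfig.blocksOf_starts {n : ℕ} {M : Finset (Finset ℕ)} (hM : IsBlockConfig n M) :
    blocksOf n (starts M) = M := by
  rw [blocksOf, starts, image_image]
  exact (image_congr fun B hB => hM.blockAt_blockStart hB).trans image_id

lemma sum_fib_card_isBlockConfig {n : ℕ} (lmax : ℕ) (hn : 0 < n) :
    ∑ M ∈ (range n).powerset.powerset with IsBlockConfig n M ∧ #M ≤ lmax + 1,
        Nat.fib (#M + 2) =
      ∑ s ∈ ((range n).erase 0).powerset with #s ≤ lmax, Nat.fib (#s + 3) := by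
  have h0 : 0 ∈ range n := mem_range.2 hn
  have hins {s : Finset ℕ} (hs : s ⊆ (range n).erase 0) : insert 0 s ⊆ range n :=
    insert_subset h0 (hs.trans (erase_subset 0 _))
  have h0s {s : Finset ℕ} (hs : s ⊆ (range n).erase 0) : 0 ∉ s := fun h => by simpa using hs h
  refine sum_nbij' (fun M => (starts M).erase 0) (fun s => blocksOf n (insert 0 s)) ?_ ?_ ?_ ?_ ?_
  all_goals simp only [mem_filter, mem_powerset]
  · rintro M ⟨-, hM, hcard⟩
    refine ⟨erase_subset_erase 0 hM.starts_subset_range, ?_⟩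
    rw [card_erase_of_mem (hM.zero_mem_starts hn), hM.card_starts]
    omega
  · rintro s ⟨hs, hcard⟩
    have hM := isBlockConfig_blocksOf (hins hs) (mem_insert_self 0 s)
    refine ⟨hM.subset_powerset_range, hM, ?_⟩
    rw [← hM.card_starts, starts_blocksOf (hins hs), card_insert_of_notMem (h0s hs)]
    omega
  · rintro M ⟨-, hM, -⟩
    rw [insert_erase (hM.zero_mem_starts hn), hM.blocksOf_starts]
  · rintro s ⟨hs, -⟩
    rw [starts_blocksOf (hins hs), erase_insert (h0s hs)]
  · rintro M ⟨-, hM, -⟩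
    have hpos := card_pos.2 ⟨0, hM.zero_mem_starts hn⟩
    rw [card_erase_of_mem (hM.zero_mem_starts hn), ← hM.card_starts]
    congr 1
    omega

theorem number_of_evaluations_general (n dmax lmax : ℕ) (hn : 1 ≤ n) :
    ((Finset.range (dmax + 1) ×ˢ
        ((Finset.range n).powerset.powerset ×ˢ (Finset.range n).powerset.powerset)).filter
      (fun p => IsBlockConfig n p.2.1 ∧ p.2.1.card ≤ lmax + 1 ∧ p.2.2 ⊆ p.2.1 ∧
        ∀ B ∈ p.2.2, ∀ B' ∈ p.2.2, ¬ AdjBlocks B B')).card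
      = (dmax + 1) * ∑ l ∈ Finset.range (lmax + 1), (n - 1).choose l * Nat.fib (l + 3) := by
  set P := (range n).powerset.powerset
  rw [filter_product_right (fun q : Finset (Finset ℕ) × Finset (Finset ℕ) =>
      IsBlockConfig n q.1 ∧ #q.1 ≤ lmax + 1 ∧ q.2 ⊆ q.1 ∧ ∀ B ∈ q.2, ∀ B' ∈ q.2, ¬ AdjBlocks B B'),
    card_product, card_range]
  congr 1
  calc _ = #{q ∈ P ×ˢ P | (IsBlockConfig n q.1 ∧ #q.1 ≤ lmax + 1) ∧
          (q.2 ⊆ q.1 ∧ ∀ B ∈ q.2, ∀ B' ∈ q.2, ¬ AdjBlocks B B')} := by simp only [and_assoc]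
    _ = ∑ M ∈ P with IsBlockConfig n M ∧ #M ≤ lmax + 1,
          #{R ∈ P | R ⊆ M ∧ ∀ B ∈ R, ∀ B' ∈ R, ¬ AdjBlocks B B'} :=
      card_filter_product_and _ _ (fun M => IsBlockConfig n M ∧ #M ≤ lmax + 1)
        (fun M R => R ⊆ M ∧ ∀ B ∈ R, ∀ B' ∈ R, ¬ AdjBlocks B B')
    _ = ∑ M ∈ P with IsBlockConfig n M ∧ #M ≤ lmax + 1, Nat.fib (#M + 2) :=
      sum_congr rfl fun M hM => (mem_filter.1 hM).2.1.card_filter_subset_forall_not_adjBlocks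
    _ = ∑ s ∈ ((range n).erase 0).powerset with #s ≤ lmax, Nat.fib (#s + 3) :=
      sum_fib_card_isBlockConfig lmax hn
    _ = _ := by
      rw [sum_powerset_filter_card_le _ _ fun l => Nat.fib (l + 3),
        card_erase_of_mem (mem_range.2 hn), card_range]
      simp only [smul_eq_mul]

/-- The number of triples `(d, M, R)` with `0 ≤ d ≤ d_max`, `M` a block configuration
of `{0,…,n−1}` with at most `l_max + 1` blocks, and `R ⊆ M` with no two blocks of `R`
adjacent, equals `(d_max + 1) · Σ_{l=0}^{l_max} C(n−1, l) · F (l+3)`. -/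
theorem number_of_evaluations (n dmax lmax : ℕ) (hn : 1 ≤ n) (hl : lmax ≤ n - 1) :
    ((Finset.range (dmax + 1) ×ˢ
        ((Finset.range n).powerset.powerset ×ˢ (Finset.range n).powerset.powerset)).filter
      (fun p => IsBlockConfig n p.2.1 ∧ p.2.1.card ≤ lmax + 1 ∧ p.2.2 ⊆ p.2.1 ∧
        ∀ B ∈ p.2.2, ∀ B' ∈ p.2.2, ¬ AdjBlocks B B')).card
      = (dmax + 1) * ∑ l ∈ Finset.range (lmax + 1), (n - 1).choose l * Nat.fib (l + 3) :=
  number_of_evaluations_general n dmax lmax hn
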